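/- arXiv:2601.15680 — 2 statements merged into one kernel-verified Lean document; each statement's English description precedes it below -/
import Mathlib

section
/- For all integers n ≥ 0 and all integers k ≥ j ≥ 0, a_{3(k-j)+5, 3k+1}(3n+2) ≡ 0 (mod 3). -/
/-- `colorPart r s n` is the number `a_{r,s}(n)` of partitions of `n` in which even parts
may appear in any of `r` colors and odd parts in any of `s` colors, realized as the
coefficient of `q^n` in `∏_{m ≥ 1} (1 - q^{2m-1})^{-s} (1 - q^{2m})^{-r}` over `ℤ`.  Since
the factors with `2m - 1 > n` do not affect the coefficient of `q^n`, this coefficient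
equals the coefficient of `q^n` in the finite product of the factors for `1 ≤ m ≤ n + 1`. -/
noncomputable def colorPart (r s n : ℕ) : ℤ :=
  PowerSeries.coeff (R := ℤ) n
    (∏ m ∈ Finset.range (n + 1),
      (PowerSeries.invOfUnit (1 - PowerSeries.X ^ (2 * m + 1)) 1) ^ s *
      (PowerSeries.invOfUnit (1 - PowerSeries.X ^ (2 * m + 2)) 1) ^ r)

/-!
Modulo 3 we have `(1 - q^d)^3 = 1 - q^(3d)`. Since `s ≡ 1` and `r ≡ 2 (mod 3)`, the generating
function is `H(q) · G(q³)` with `H = ∏ (1 - q^(2m-1))² (1 - q^(2m))`, so its coefficient of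
`q^(3n+2)` is a combination of coefficients of `H` at exponents `≡ 2 (mod 3)`. By Gauss's identity
`H = ∑_{k ∈ ℤ} (-1)^k q^(k²)`, and no square is `≡ 2 (mod 3)`.

Only finite products occur, so Gauss's identity is used in the finite form
`(q; q²)_n² = ∑_k (-1)^(n+k) [2n, k]_{q²} q^((k-n)²)`, a specialization of the
`q`-binomial theorem, together with `(q²; q²)_n [2n, k]_{q²} ≡ 1 (mod q^(2(n - |k-n|) + 2))`,
which makes the truncated product agree with the theta series up to degree `2n`.
-/

open PowerSeries Finset

section QAnalog

variable {S : Type*} [CommRing S] (q : S)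

def qPochhammer (n : ℕ) : S := ∏ i ∈ range n, (1 - q ^ (i + 1))

def qBinomial : ℕ → ℕ → S
  | _, 0 => 1
  | 0, _ + 1 => 0
  | n + 1, k + 1 => q ^ (k + 1) * qBinomial n (k + 1) + qBinomial n k

@[simp]
theorem qBinomial_zero_right (n : ℕ) : qBinomial q n 0 = 1 := by
  cases n <;> rfl

theorem qBinomial_succ_succ (n k : ℕ) :
    qBinomial q (n + 1) (k + 1) = q ^ (k + 1) * qBinomial q n (k + 1) + qBinomial q n k :=
  rfl

theorem qBinomial_eq_zero_of_lt {n k : ℕ} (h : n < k) : qBinomial q n k = 0 := by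
  induction n generalizing k with
  | zero => obtain ⟨k, rfl⟩ := Nat.exists_eq_add_one.mpr h; rfl
  | succ n ih =>
    obtain ⟨k, rfl⟩ := Nat.exists_eq_add_one.mpr (Nat.zero_lt_of_lt h)
    rw [qBinomial_succ_succ, ih (by omega), ih (by omega), mul_zero, add_zero]

@[simp]
theorem qBinomial_self (n : ℕ) : qBinomial q n n = 1 := by
  induction n with
  | zero => rfl
  | succ n ih =>
    rw [qBinomial_succ_succ, qBinomial_eq_zero_of_lt q n.lt_succ_self, ih, mul_zero, zero_add]

theorem qPochhammer_succ (n : ℕ) :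
    qPochhammer q (n + 1) = qPochhammer q n * (1 - q ^ (n + 1)) :=
  prod_range_succ _ _

theorem qPochhammer_mul_qPochhammer_mul_qBinomial (m l : ℕ) :
    qPochhammer q m * qPochhammer q l * qBinomial q (m + l) m = qPochhammer q (m + l) := by
  induction m generalizing l with
  | zero => simp [qPochhammer]
  | succ m ihm =>
    induction l with
    | zero => simp [qPochhammer]
    | succ l ihl =>
      have h := ihm (l + 1)
      rw [← add_assoc, add_right_comm, qPochhammer_succ q l] at h
      rw [qPochhammer_succ q m] at ihl ⊢
      rw [show m + 1 + (l + 1) = m + 1 + l + 1 by omega, qBinomial_succ_succ,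
        qPochhammer_succ q l, qPochhammer_succ q (m + 1 + l)]
      linear_combination (1 - q ^ (l + 1)) * q ^ (m + 1) * ihl + (1 - q ^ (m + 1)) * h

theorem pow_dvd_prod_one_sub_pow_sub_one {s : Finset ℕ} {c : ℕ} (h : ∀ i ∈ s, c ≤ i + 1) :
    q ^ c ∣ ∏ i ∈ s, (1 - q ^ (i + 1)) - 1 := by
  rw [← Ideal.mem_span_singleton, ← Ideal.Quotient.eq_zero_iff_mem, map_sub, map_one, map_prod,
    sub_eq_zero]
  refine prod_eq_one fun i hi => ?_
  rw [map_sub, map_one, sub_eq_self, Ideal.Quotient.eq_zero_iff_mem, Ideal.mem_span_singleton]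
  exact pow_dvd_pow q (h i hi)

theorem prod_add_mul_pow_eq_sum_qBinomial (w z : S) (N : ℕ) :
    ∏ i ∈ range N, (w + z * q ^ i) =
      ∑ p ∈ antidiagonal N, q ^ p.1.choose 2 * qBinomial q N p.1 * z ^ p.1 * w ^ p.2 := by
  induction N generalizing z with
  | zero => simp
  | succ N ih =>
    set g : ℕ × ℕ → S := fun p =>
      q ^ (p.1.choose 2 + p.1) * qBinomial q N p.1 * z ^ p.1 * w ^ p.2
    have hg := Nat.sum_antidiagonal_succ (n := N) (f := g)
    have hg₀ : g (N + 1, 0) = 0 := by simp [g, qBinomial_eq_zero_of_lt q N.lt_succ_self]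
    rw [Nat.sum_antidiagonal_succ', hg₀, zero_add] at hg
    have hprod :
        ∏ i ∈ range N, (w + z * q ^ (i + 1)) = ∏ i ∈ range N, (w + z * q * q ^ i) :=
      prod_congr rfl fun i _ => by ring
    have hw : ∑ p ∈ antidiagonal N,
        q ^ p.1.choose 2 * qBinomial q N p.1 * (z * q) ^ p.1 * w ^ p.2 * w =
          ∑ p ∈ antidiagonal N, g (p.1, p.2 + 1) :=
      sum_congr rfl fun p _ => by simp only [g]; ring
    rw [prod_range_succ', hprod, ih, Nat.sum_antidiagonal_succ, mul_add, sum_mul, sum_mul, hw, hg,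
      add_assoc, ← sum_add_distrib]
    congr 1
    · simp [g]
    · refine sum_congr rfl fun p _ => ?_
      simp only [g, qBinomial_succ_succ, Nat.choose_succ_succ', Nat.choose_one_right]
      ring

variable {q}

theorem isUnit_qPochhammer (hq : ∀ i, IsUnit (1 - q ^ (i + 1))) (n : ℕ) :
    IsUnit (qPochhammer q n) :=
  IsUnit.prod_iff.mpr fun i _ => hq i

theorem qBinomial_symm_add (hq : ∀ i, IsUnit (1 - q ^ (i + 1))) (m l : ℕ) :
    qBinomial q (m + l) m = qBinomial q (m + l) l := by
  refine ((isUnit_qPochhammer hq m).mul (isUnit_qPochhammer hq l)).mul_left_cancel ?_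
  rw [qPochhammer_mul_qPochhammer_mul_qBinomial, mul_comm (qPochhammer q m), add_comm,
    qPochhammer_mul_qPochhammer_mul_qBinomial]

theorem pow_dvd_qPochhammer_mul_qBinomial_sub_one (hq : ∀ i, IsUnit (1 - q ^ (i + 1)))
    {m l M : ℕ} (hml : m ≤ l) (hmM : m ≤ M) :
    q ^ (m + 1) ∣ qPochhammer q M * qBinomial q (m + l) m - 1 := by
  set A := ∏ i ∈ Ico m M, (1 - q ^ (i + 1))
  set B := ∏ i ∈ Ico l (m + l), (1 - q ^ (i + 1))
  have hB : qPochhammer q m * qBinomial q (m + l) m = B := by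
    refine (isUnit_qPochhammer hq l).mul_left_cancel ?_
    rw [← mul_assoc, mul_comm (qPochhammer q l), qPochhammer_mul_qPochhammer_mul_qBinomial,
      qPochhammer, qPochhammer, prod_range_mul_prod_Ico _ (Nat.le_add_left l m)]
  have hA : qPochhammer q M = qPochhammer q m * A := (prod_range_mul_prod_Ico _ hmM).symm
  have hA₁ : q ^ (m + 1) ∣ A - 1 :=
    pow_dvd_prod_one_sub_pow_sub_one q fun i hi => by have := (mem_Ico.mp hi).1; omega
  have hB₁ : q ^ (m + 1) ∣ B - 1 :=
    pow_dvd_prod_one_sub_pow_sub_one q fun i hi => by have := (mem_Ico.mp hi).1; omega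
  rw [hA, mul_right_comm, hB, show B * A - 1 = (A - 1) * B + (B - 1) by ring]
  exact dvd_add (dvd_mul_of_dvd_left hA₁ B) hB₁

end QAnalog

theorem Nat.choose_two_mul_two_add_self (k : ℕ) : k.choose 2 * 2 + k = k * k := by
  induction k with
  | zero => rfl
  | succ k ih => rw [Nat.choose_succ_succ', Nat.choose_one_right]; nlinarith [ih]

theorem Nat.not_isSquare_of_mod_three_eq_two {b : ℕ} (hb : b % 3 = 2) : ¬IsSquare b := by
  rintro ⟨r, rfl⟩
  rw [Nat.mul_mod] at hb
  have := Nat.mod_lt r three_pos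
  interval_cases r % 3 <;> simp at hb

section GaussIdentity

variable {R : Type*} [CommRing R]

theorem prod_X_pow_sub_X_pow_odd (n : ℕ) :
    ∏ i ∈ range (2 * n), (X ^ (2 * n) + -X * (X ^ 2) ^ i : R⟦X⟧) =
      (-1) ^ n * X ^ (3 * n ^ 2) * (∏ i ∈ range n, (1 - X ^ (2 * i + 1))) ^ 2 := by
  have hodd : ∑ i ∈ range n, (2 * i + 1) = n ^ 2 := by
    induction n with
    | zero => rfl
    | succ n ih => rw [sum_range_succ, ih]; ring
  have hlow : ∀ i ∈ range n, (X ^ (2 * n) + -X * (X ^ 2) ^ i : R⟦X⟧) =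
      -1 * X ^ (2 * i + 1) * (1 - X ^ (2 * (n - 1 - i) + 1)) := fun i hi => by
    rw [show 2 * n = 2 * i + 1 + (2 * (n - 1 - i) + 1) by have := mem_range.mp hi; omega]
    ring
  have hhigh : ∀ i ∈ range n, (X ^ (2 * n) + -X * (X ^ 2) ^ (n + i) : R⟦X⟧) =
      X ^ (2 * n) * (1 - X ^ (2 * i + 1)) := fun i _ => by ring
  have hsplit := prod_range_add (fun i => (X ^ (2 * n) + -X * (X ^ 2) ^ i : R⟦X⟧)) n n
  rw [← two_mul] at hsplit
  rw [hsplit, prod_congr rfl hlow, prod_congr rfl hhigh, prod_mul_distrib, prod_mul_distrib,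
    prod_mul_distrib, prod_range_reflect (fun i => 1 - (X : R⟦X⟧) ^ (2 * i + 1)), prod_const,
    prod_const, card_range, prod_pow_eq_pow_sum, hodd, ← pow_mul]
  ring

/-- The `q`-binomial theorem at `q = X²`, `w = X^(2n)`, `z = -X`, divided by `X^(3n²)`. -/
theorem prod_one_sub_X_pow_odd_sq (n : ℕ) :
    (∏ i ∈ range n, (1 - X ^ (2 * i + 1) : R⟦X⟧)) ^ 2 =
      ∑ k ∈ range (2 * n + 1),
        (-1) ^ (n + k) * qBinomial (X ^ 2) (2 * n) k * X ^ (((k : ℤ) - n).natAbs ^ 2) := by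
  have h := prod_add_mul_pow_eq_sum_qBinomial (X ^ 2 : R⟦X⟧) (X ^ (2 * n)) (-X) (2 * n)
  rw [prod_X_pow_sub_X_pow_odd, Nat.sum_antidiagonal_eq_sum_range_succ_mk] at h
  have hterm : ∀ k ∈ range (2 * n + 1),
      (X ^ 2 : R⟦X⟧) ^ k.choose 2 * qBinomial (X ^ 2) (2 * n) k * (-X) ^ k *
          (X ^ (2 * n)) ^ (2 * n - k) =
        X ^ (3 * n ^ 2) * ((-1) ^ n * ((-1) ^ (n + k) * qBinomial (X ^ 2) (2 * n) k *
          X ^ (((k : ℤ) - n).natAbs ^ 2))) := fun k hk => by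
    have hk : k ≤ 2 * n := Nat.lt_succ_iff.mp (mem_range.mp hk)
    have hexp : 2 * k.choose 2 + k + 2 * n * (2 * n - k) =
        3 * n ^ 2 + ((k : ℤ) - n).natAbs ^ 2 := by
      have hchoose := Nat.choose_two_mul_two_add_self k
      zify [hk] at hchoose ⊢
      rw [sq_abs]
      linear_combination hchoose
    have hX : (X : R⟦X⟧) ^ (2 * k.choose 2) * X ^ k * X ^ (2 * n * (2 * n - k)) =
        X ^ (3 * n ^ 2) * X ^ (((k : ℤ) - n).natAbs ^ 2) := by
      rw [← pow_add, ← pow_add, ← pow_add, hexp]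
    have hsign : (-1 : R⟦X⟧) ^ k = (-1) ^ n * (-1) ^ (n + k) := by
      rw [← pow_add, ← add_assoc, ← two_mul, pow_add, pow_mul, neg_one_sq, one_pow, one_mul]
    rw [neg_pow, ← pow_mul, ← pow_mul]
    linear_combination (qBinomial (X ^ 2) (2 * n) k * (-1) ^ k) * hX +
      (qBinomial (X ^ 2) (2 * n) k * X ^ (3 * n ^ 2) * X ^ (((k : ℤ) - n).natAbs ^ 2)) * hsign
  rw [sum_congr rfl hterm, ← mul_sum, ← mul_sum, mul_comm ((-1 : R⟦X⟧) ^ n), mul_assoc] at h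
  exact ((isUnit_neg_one (α := R⟦X⟧)).pow n).mul_left_cancel (X_pow_mul_cancel h)

theorem coeff_eq_of_X_pow_dvd_sub {f g : R⟦X⟧} {b c : ℕ} (h : X ^ c ∣ f - g) (hb : b < c) :
    coeff b f = coeff b g :=
  sub_eq_zero.mp (by rw [← map_sub]; exact X_pow_dvd_iff.mp h b hb)

theorem X_pow_dvd_qPochhammer_mul_qBinomial_sub_one {n k : ℕ} (hk : k ≤ 2 * n) :
    X ^ (2 * (n - ((k : ℤ) - n).natAbs + 1)) ∣
      qPochhammer (X ^ 2 : R⟦X⟧) n * qBinomial (X ^ 2) (2 * n) k - 1 := by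
  have hq : ∀ i, IsUnit (1 - (X ^ 2 : R⟦X⟧) ^ (i + 1)) := fun i =>
    isUnit_iff_constantCoeff.mpr (by simp)
  rw [pow_mul]
  rcases le_total k n with h | h
  · have := pow_dvd_qPochhammer_mul_qBinomial_sub_one hq (l := 2 * n - k) (by omega) h
    rw [Nat.add_sub_cancel' hk] at this
    rwa [show n - ((k : ℤ) - n).natAbs = k by omega]
  · have := pow_dvd_qPochhammer_mul_qBinomial_sub_one hq (m := 2 * n - k) (l := k) (M := n)
      (by omega) (by omega)
    rw [qBinomial_symm_add hq, Nat.sub_add_cancel hk] at this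
    rwa [show n - ((k : ℤ) - n).natAbs = 2 * n - k by omega]

theorem coeff_prod_eq_zero_of_not_isSquare {n b : ℕ} (hb : b ≤ 2 * n) (hsq : ¬IsSquare b) :
    coeff b (∏ i ∈ range n, ((1 - X ^ (2 * i + 1)) ^ 2 * (1 - X ^ (2 * i + 2))) : R⟦X⟧) =
      0 := by
  have hpoch : ∏ i ∈ range n, (1 - X ^ (2 * i + 2) : R⟦X⟧) = qPochhammer (X ^ 2) n :=
    prod_congr rfl fun i _ => by rw [← pow_mul, mul_add, mul_one]
  rw [prod_mul_distrib, prod_pow, prod_one_sub_X_pow_odd_sq, hpoch, sum_mul, map_sum]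
  refine sum_eq_zero fun k hk => ?_
  have hk : k ≤ 2 * n := Nat.lt_succ_iff.mp (mem_range.mp hk)
  set t := ((k : ℤ) - n).natAbs
  set y := qPochhammer (X ^ 2 : R⟦X⟧) n * qBinomial (X ^ 2) (2 * n) k
  have ht : t ≤ n := by omega
  have hterm : (-1) ^ (n + k) * qBinomial (X ^ 2) (2 * n) k * X ^ (t ^ 2) *
      qPochhammer (X ^ 2) n = C ((-1 : R) ^ (n + k)) * (X ^ (t ^ 2) * y) := by
    simp only [y, map_pow, map_neg, map_one]
    ring
  have hdvd : X ^ (t ^ 2 + 2 * (n - t + 1)) ∣ X ^ (t ^ 2) * y - X ^ (t ^ 2) := by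
    rw [← mul_sub_one, pow_add]
    exact mul_dvd_mul_left _ (X_pow_dvd_qPochhammer_mul_qBinomial_sub_one hk)
  have hlt : b < t ^ 2 + 2 * (n - t + 1) := by
    zify [ht]
    nlinarith [sq_nonneg ((t : ℤ) - 1)]
  rw [hterm, coeff_C_mul, coeff_eq_of_X_pow_dvd_sub hdvd hlt, coeff_X_pow,
    if_neg fun h => hsq ⟨t, h.trans (sq t)⟩, mul_zero]

end GaussIdentity

section ModThree

variable {R : Type*} [CommRing R]

theorem one_sub_X_pow_mul_invOfUnit {d : ℕ} (hd : d ≠ 0) :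
    (1 - X ^ d : R⟦X⟧) * invOfUnit (1 - X ^ d) 1 = 1 :=
  mul_invOfUnit _ _ (by simp [zero_pow hd])

theorem prod_mul_prod_invOfUnit (L s r : ℕ) :
    (∏ m ∈ range L, (1 - X ^ (2 * m + 1)) ^ s * (1 - X ^ (2 * m + 2)) ^ r : R⟦X⟧) *
      ∏ m ∈ range L,
        invOfUnit (1 - X ^ (2 * m + 1)) 1 ^ s * invOfUnit (1 - X ^ (2 * m + 2)) 1 ^ r = 1 := by
  rw [← prod_mul_distrib]
  refine prod_eq_one fun m _ => ?_
  rw [mul_mul_mul_comm, ← mul_pow, ← mul_pow, one_sub_X_pow_mul_invOfUnit (by omega),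
    one_sub_X_pow_mul_invOfUnit (by omega), one_pow, one_pow, one_mul]

theorem one_sub_X_pow_pow_three [CharP R 3] (d : ℕ) :
    (1 - X ^ d : R⟦X⟧) ^ 3 = expand 3 three_ne_zero (1 - X ^ d) := by
  have : CharP R⟦X⟧ 3 := charP_of_injective_algebraMap C_injective 3
  rw [sub_pow_char, one_pow, map_sub, map_one, map_pow, expand_X, ← pow_mul, ← pow_mul,
    mul_comm]

theorem coeff_eq_zero_of_prod_mul_eq_one [CharP R 3] {L s r b : ℕ} (hs : 3 ∣ s + 2)
    (hr : 3 ∣ r + 1) (hb : b % 3 = 2) (hbL : b ≤ 2 * L) {V : R⟦X⟧}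
    (hV : (∏ m ∈ range L, (1 - X ^ (2 * m + 1)) ^ s * (1 - X ^ (2 * m + 2)) ^ r) * V = 1) :
    coeff b V = 0 := by
  obtain ⟨a, ha⟩ := hs
  obtain ⟨c, hc⟩ := hr
  set U : R⟦X⟧ := ∏ m ∈ range L, (1 - X ^ (2 * m + 1)) ^ s * (1 - X ^ (2 * m + 2)) ^ r
  set H : R⟦X⟧ := ∏ m ∈ range L, ((1 - X ^ (2 * m + 1)) ^ 2 * (1 - X ^ (2 * m + 2)))
  set W : R⟦X⟧ := ∏ m ∈ range L, ((1 - X ^ (2 * m + 1)) ^ a * (1 - X ^ (2 * m + 2)) ^ c)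
  have hUH : U * H = expand 3 three_ne_zero W := by
    rw [map_prod, ← prod_mul_distrib]
    refine prod_congr rfl fun m _ => ?_
    rw [map_mul, map_pow, map_pow, ← one_sub_X_pow_pow_three, ← one_sub_X_pow_pow_three,
      ← pow_mul, ← pow_mul, ← ha, ← hc, mul_mul_mul_comm, ← pow_add, ← pow_succ]
  obtain ⟨W', hW'⟩ := (isUnit_iff_constantCoeff.mpr (by simp [W]) : IsUnit W).exists_right_inv
  have hVeq : V = H * expand 3 three_ne_zero W' := by
    calc V = V * expand 3 three_ne_zero (W * W') := by rw [hW', map_one, mul_one]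
      _ = U * V * H * expand 3 three_ne_zero W' := by rw [map_mul, ← hUH]; ring
      _ = H * expand 3 three_ne_zero W' := by rw [hV, one_mul]
  rw [hVeq, coeff_mul]
  refine sum_eq_zero fun p hp => ?_
  rw [HasAntidiagonal.mem_antidiagonal] at hp
  by_cases h3 : 3 ∣ p.2
  · rw [coeff_prod_eq_zero_of_not_isSquare (by omega)
      (Nat.not_isSquare_of_mod_three_eq_two (by omega)), zero_mul]
  · rw [coeff_expand_of_not_dvd _ _ _ h3, mul_zero]

end ModThree

theorem stmt4_general (n j k : ℕ) :
    colorPart (3 * (k - j) + 5) (3 * k + 1) (3 * n + 2) ≡ 0 [ZMOD 3] := by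
  have hF := congrArg (map (Int.castRingHom (ZMod 3)))
    (prod_mul_prod_invOfUnit (R := ℤ) (3 * n + 2 + 1) (3 * k + 1) (3 * (k - j) + 5))
  set F : ℤ⟦X⟧ := ∏ m ∈ range (3 * n + 2 + 1),
    invOfUnit (1 - X ^ (2 * m + 1)) 1 ^ (3 * k + 1) *
      invOfUnit (1 - X ^ (2 * m + 2)) 1 ^ (3 * (k - j) + 5)
  simp only [map_mul, map_prod, map_pow, map_sub, map_one, map_X] at hF
  have h := coeff_eq_zero_of_prod_mul_eq_one (b := 3 * n + 2) ⟨k + 1, by ring⟩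
    ⟨k - j + 2, by ring⟩ (by omega) (by omega) hF
  rw [coeff_map, Int.coe_castRingHom] at h
  exact (ZMod.intCast_eq_intCast_iff _ 0 3).mp (by rwa [Int.cast_zero])

theorem stmt4 (n j k : ℕ) (hjk : j ≤ k) :
    colorPart (3 * (k - j) + 5) (3 * k + 1) (3 * n + 2) ≡ 0 [ZMOD 3] :=
  stmt4_general n j k
end

section
/- Let p ≥ 5 be a prime and let r be an integer with 1 ≤ r ≤ p-1 such that 12r+1 is a quadratic non-residue modulo p. Then for all integers n ≥ 0 and all integers k ≥ j ≥ 0, a_{p(k-j)+(p-1), pk+p}(pn+r) ≡ 0 (mod p). -/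
open Finset

namespace PowerSeries

variable {R S : Type*} [CommRing R] [CommRing S]

theorem invOfUnit_one_sub_X_pow_mul {d : ℕ} (hd : d ≠ 0) :
    invOfUnit (1 - X ^ d : R⟦X⟧) 1 * (1 - X ^ d) = 1 :=
  invOfUnit_mul _ _ (by simp [hd])

theorem invOfUnit_one_sub_X_pow_pow_succ_mul {d : ℕ} (hd : d ≠ 0) (n : ℕ) :
    invOfUnit (1 - X ^ d : R⟦X⟧) 1 ^ (n + 1) * (1 - X ^ d) = invOfUnit (1 - X ^ d) 1 ^ n := by
  rw [pow_succ, mul_assoc, invOfUnit_one_sub_X_pow_mul hd, mul_one]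

theorem map_invOfUnit_one_sub_X_pow (f : R →+* S) {d : ℕ} (hd : d ≠ 0) :
    map f (invOfUnit (1 - X ^ d : R⟦X⟧) 1) = invOfUnit (1 - X ^ d) 1 := by
  refine left_inv_eq_right_inv ?_ (mul_invOfUnit _ _ (by simp [hd]))
  simpa using congrArg (map f) (invOfUnit_one_sub_X_pow_mul (R := R) hd)

theorem X_pow_dvd_prod_one_sub_X_pow_sub_one {L : ℕ} {t : Finset ℕ} (ht : ∀ m ∈ t, L ≤ m) :
    (X : R⟦X⟧) ^ (L + 1) ∣ ∏ m ∈ t, (1 - X ^ (m + 1)) - 1 := by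
  refine prod_induction _ (fun g => (X : R⟦X⟧) ^ (L + 1) ∣ g - 1) (fun g h hg hh => ?_)
    (by simp) fun m hm => ?_
  · simpa [mul_sub, sub_mul] using (dvd_mul_of_dvd_left hg h).add hh
  · simpa using (pow_dvd_pow X (Nat.add_le_add_right (ht m hm) 1)).neg_right

theorem coeff_prod_range_one_sub_X_pow {c L : ℕ} (hc : c ≤ L) :
    coeff c (∏ m ∈ range L, (1 - X ^ (m + 1)) : R⟦X⟧) = coeff c (pentagonalSeries R) := by
  classical
  obtain ⟨s, hs⟩ := Filter.eventually_atTop.mp (coeff_prod_one_sub_X_pow_eventually_eq R c)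
  set tail := ∏ m ∈ (s ∪ range L) \ range L, (1 - X ^ (m + 1) : R⟦X⟧)
  have htail : (X : R⟦X⟧) ^ (L + 1) ∣ tail - 1 :=
    X_pow_dvd_prod_one_sub_X_pow_sub_one fun m hm => by simpa using (mem_sdiff.mp hm).2
  have hstable : coeff c (tail * ∏ m ∈ range L, (1 - X ^ (m + 1))) =
      coeff c (∏ m ∈ range L, (1 - X ^ (m + 1))) := by
    rw [← sub_add_cancel tail 1, add_mul, one_mul, map_add,
      X_pow_dvd_iff.mp (dvd_mul_of_dvd_left htail _) c (by omega), zero_add]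
  rw [← hstable, prod_sdiff subset_union_right, hs _ subset_union_left]

theorem coeff_prod_range_one_sub_X_pow_two_mul_eq_zero {b L : ℕ} (hb : b ≤ 2 * L)
    (hsq : ∀ x : ℤ, x ^ 2 ≠ 12 * b + 1) :
    coeff b (∏ m ∈ range L, (1 - X ^ (2 * m + 2)) : R⟦X⟧) = 0 := by
  have hexpand : (∏ m ∈ range L, (1 - X ^ (2 * m + 2)) : R⟦X⟧) =
      expand 2 two_ne_zero (∏ m ∈ range L, (1 - X ^ (m + 1))) := by
    simp [map_prod, expand_X, ← pow_mul, mul_add]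
  rw [hexpand]
  obtain ⟨c, rfl⟩ | hodd := em (2 ∣ b)
  · rw [coeff_expand_mul, coeff_prod_range_one_sub_X_pow (by omega)]
    refine coeff_pentagonalSeries_eq_zero R fun ⟨k, hk⟩ => hsq (6 * k - 1) ?_
    have h2c : 2 * (c : ℤ) = k * (3 * k - 1) := hk ▸ two_mul_natCast_pentagonal k
    push_cast
    linear_combination -12 * h2c
  · exact coeff_expand_of_not_dvd _ _ _ hodd

theorem prod_invOfUnit_pow_eq_pow_mul_prod {p : ℕ} (hp : p ≠ 0) (L k a : ℕ) :
    ∏ m ∈ range L, invOfUnit (1 - X ^ (2 * m + 1) : R⟦X⟧) 1 ^ (p * k + p) *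
        invOfUnit (1 - X ^ (2 * m + 2)) 1 ^ (p * a + (p - 1)) =
      (∏ m ∈ range L, invOfUnit (1 - X ^ (2 * m + 1) : R⟦X⟧) 1 ^ (k + 1) *
        invOfUnit (1 - X ^ (2 * m + 2)) 1 ^ (a + 1)) ^ p *
      ∏ m ∈ range L, (1 - X ^ (2 * m + 2)) := by
  rw [← prod_pow, ← prod_mul_distrib]
  refine prod_congr rfl fun m _ => ?_
  have hexp : (a + 1) * p = p * a + (p - 1) + 1 := by
    rw [add_one_mul, mul_comm a p]
    omega
  rw [mul_pow, ← pow_mul, ← pow_mul, hexp, mul_assoc,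
    invOfUnit_one_sub_X_pow_pow_succ_mul (by omega), add_one_mul, mul_comm p k]

theorem pow_char_eq_expand (p : ℕ) [Fact p.Prime] (f : (ZMod p)⟦X⟧) :
    f ^ p = expand p (Fact.out : p.Prime).ne_zero f := by
  rw [← MvPowerSeries.map_frobenius_expand p (Fact.out : p.Prime).ne_zero, ZMod.frobenius_zmod,
    MvPowerSeries.map_id]
  rfl

theorem coeff_pow_char_mul_eq_zero {p : ℕ} [Fact p.Prime] {N : ℕ} (f : (ZMod p)⟦X⟧)
    {g : (ZMod p)⟦X⟧} (hg : ∀ b ≤ N, b ≡ N [MOD p] → coeff b g = 0) :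
    coeff N (f ^ p * g) = 0 := by
  rw [pow_char_eq_expand, coeff_mul]
  refine sum_eq_zero fun ⟨a, b⟩ hab => ?_
  rw [HasAntidiagonal.mem_antidiagonal] at hab
  by_cases hpa : p ∣ a
  · have hb : b ≡ N [MOD p] := by
      simpa [← hab] using ((Nat.modEq_zero_iff_dvd.mpr hpa).add_right b).symm
    rw [hg b (by omega) hb, mul_zero]
  · rw [coeff_expand_of_not_dvd _ _ _ hpa, zero_mul]

end PowerSeries

open PowerSeries

theorem intCast_colorPart {R : Type*} [CommRing R] (r s n : ℕ) :
    ((colorPart r s n : ℤ) : R) =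
      coeff n (∏ m ∈ range (n + 1), invOfUnit (1 - X ^ (2 * m + 1) : R⟦X⟧) 1 ^ s *
        invOfUnit (1 - X ^ (2 * m + 2)) 1 ^ r) := by
  rw [colorPart, ← eq_intCast (Int.castRingHom R), ← coeff_map, map_prod]
  simp only [map_mul, map_pow, map_invOfUnit_one_sub_X_pow _ (Nat.succ_ne_zero _)]

theorem stmt10_general (p : ℕ) (hp : p.Prime)
    (r : ℕ)
    (hqnr : ∀ x : ℤ, ¬ x ^ 2 ≡ (12 * r + 1 : ℕ) [ZMOD p])
    (n j k : ℕ) :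
    colorPart (p * (k - j) + (p - 1)) (p * k + p) (p * n + r) ≡ 0 [ZMOD p] := by
  have := Fact.mk hp
  rw [← ZMod.intCast_eq_intCast_iff, Int.cast_zero, intCast_colorPart,
    prod_invOfUnit_pow_eq_pow_mul_prod hp.ne_zero]
  refine coeff_pow_char_mul_eq_zero _ fun b hbN hbr =>
    coeff_prod_range_one_sub_X_pow_two_mul_eq_zero (by omega) fun x hx => hqnr x ?_
  have hbr' : (b : ℤ) ≡ r [ZMOD p] :=
    Int.natCast_modEq_iff.mpr (Nat.modEq_modulus_mul_add_iff.mp hbr)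
  rw [hx]
  push_cast
  exact (hbr'.mul_left 12).add_right 1

theorem stmt10 (p : ℕ) (hp : p.Prime) (hp5 : 5 ≤ p)
    (r : ℕ) (hr1 : 1 ≤ r) (hr2 : r ≤ p - 1)
    (hqnr : ∀ x : ℤ, ¬ x ^ 2 ≡ (12 * r + 1 : ℕ) [ZMOD p])
    (n j k : ℕ) (hjk : j ≤ k) :
    colorPart (p * (k - j) + (p - 1)) (p * k + p) (p * n + r) ≡ 0 [ZMOD p] :=
  stmt10_general p hp r hqnr n j k
end
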